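/- Let u₁ = (1, 0, 0), e₃ = (0, 0, 1) and v = (√3/2, 1/2, 0) in ℝ³, and let D̃₆ be the group generated by the reflection in the plane spanned by u₁ and e₃ (the plane y = 0) and the reflection in the plane spanned by v and e₃ (two mirrors containing the z-axis meeting at angle π/6). If L is a full-rank lattice in ℝ³ preserved by D̃₆, then there exist positive real numbers a, b such that, for the diagonal linear map D = diag(a, a, b), the lattice D⁻¹(L) is either L₍₃,₆₎ + ℤe₃ or L₍₃,₆₎ᶜ + ℤe₃. -/

import Mathlib

noncomputable section

/-- `ℝ³`, as the space of triples of reals. -/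
abbrev V3 := Fin 3 → ℝ

/-- A full-rank lattice in `ℝ³`. -/
def IsFullLattice (L : AddSubgroup V3) : Prop :=
  ∃ b : Module.Basis (Fin 3) ℝ V3,
    ∀ x, x ∈ L ↔ ∃ c : Fin 3 → ℤ, x = ∑ i, (c i : ℝ) • b i

/-- `u₁ = (1, 0, 0)`. -/
def u₁ : V3 := ![1, 0, 0]

/-- `u₂ = (1/2, √3/2, 0)`. -/
def u₂ : V3 := ![1 / 2, Real.sqrt 3 / 2, 0]

/-- `e₃ = (0, 0, 1)`. -/
def e₃ : V3 := ![0, 0, 1]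

/-- The lattice `L₍₃,₆₎ + ℤe₃`. -/
def triLat : Set V3 := {x | ∃ m n k : ℤ, x = m • u₁ + n • u₂ + k • e₃}

/-- The lattice `L₍₃,₆₎ᶜ + ℤe₃`. -/
def triCentredLat : Set V3 :=
  {x | ∃ m n k : ℤ, x = m • (u₁ + u₂) + n • ((2 : ℤ) • u₁ - u₂) + k • e₃}

/-- The reflection in the plane `y = 0`, i.e. the plane spanned by `u₁` and `e₃`. -/
def reflPlaneU₁ : V3 → V3 := fun x => ![x 0, -(x 1), x 2]

/-- The reflection in the plane spanned by `v = (√3/2, 1/2, 0)` and `e₃`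
(the line of `v` makes angle `π/6` with the `x`-axis). -/
def reflPlaneV : V3 → V3 := fun x =>
  ![x 0 / 2 + (Real.sqrt 3 / 2) * x 1, (Real.sqrt 3 / 2) * x 0 - x 1 / 2, x 2]

/-!
The two mirrors generate the rotation `rot60` by `π / 3` about the `z`-axis. Rounding
coordinates in the basis `w, rot60 w`, for a shortest horizontal vector `w` of `L`, shows that the
horizontal vectors of `L` are exactly `ℤ w + ℤ rot60 w`, the Eisenstein integers times `w`. On the
plane `1 - rot60` is invertible with inverse `rot60`, so every vector of `L` is such a horizontal
vector plus a vertical vector of `L`, and `L = ℤ w + ℤ rot60 w + ℤ c e₃` for the least positive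
vertical period `c`. Finally the mirror image of `w` in `y = 0` is again shortest, hence a unit
multiple of `w`, which forces `w` to point at a multiple of `π / 6`: even multiples give the
triangular lattice, odd ones the triangle-centred lattice.
-/

lemma sqrt_three_mul_self : √3 * √3 = 3 := Real.mul_self_sqrt (by norm_num)

def rot60 : V3 →ₗ[ℝ] V3 where
  toFun v := ![v 0 / 2 - √3 / 2 * v 1, √3 / 2 * v 0 + v 1 / 2, v 2]
  map_add' v w := by ext i; fin_cases i <;> simp <;> ring
  map_smul' a v := by ext i; fin_cases i <;> simp <;> ring

@[simp] lemma rot60_apply_zero (v : V3) : rot60 v 0 = v 0 / 2 - √3 / 2 * v 1 := rfl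
@[simp] lemma rot60_apply_one (v : V3) : rot60 v 1 = √3 / 2 * v 0 + v 1 / 2 := rfl
@[simp] lemma rot60_apply_two (v : V3) : rot60 v 2 = v 2 := rfl

lemma reflPlaneV_reflPlaneU₁ (v : V3) : reflPlaneV (reflPlaneU₁ v) = rot60 v := by
  ext i; fin_cases i <;> simp [reflPlaneV, reflPlaneU₁] <;> ring

lemma rot60_rot60 (v : V3) : rot60 (rot60 v) = rot60 v - v + v 2 • e₃ := by
  ext i; fin_cases i <;> simp [e₃]
  · linear_combination (-v 0 / 4) * sqrt_three_mul_self
  · linear_combination (-v 1 / 4) * sqrt_three_mul_self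

lemma rot60_rot60_of_horizontal {w : V3} (hw : w 2 = 0) : rot60 (rot60 w) = rot60 w - w := by
  simp [rot60_rot60, hw]

lemma rot60_u₁ : rot60 u₁ = u₂ := by
  ext i; fin_cases i <;> simp [u₁, u₂]

lemma rot60_two_u₁_sub_u₂ : rot60 ((2 : ℤ) • u₁ - u₂) = u₁ + u₂ := by
  ext i; fin_cases i <;> simp [u₁, u₂]
  · linear_combination (1 / 4) * sqrt_three_mul_self
  · ring

def planeNormSq (v : V3) : ℝ := v 0 ^ 2 + v 1 ^ 2

lemma planeNormSq_smul_add_smul_rot60 (a b : ℝ) (w : V3) :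
    planeNormSq (a • w + b • rot60 w) = (a ^ 2 + a * b + b ^ 2) * planeNormSq w := by
  simp only [planeNormSq, Pi.add_apply, Pi.smul_apply, smul_eq_mul, rot60_apply_zero,
    rot60_apply_one]
  linear_combination (b ^ 2 * (w 0 ^ 2 + w 1 ^ 2) / 4) * sqrt_three_mul_self

lemma planeNormSq_reflPlaneU₁ (v : V3) : planeNormSq (reflPlaneU₁ v) = planeNormSq v := by
  simp [planeNormSq, reflPlaneU₁]

lemma eq_zero_of_planeNormSq_eq_zero {v : V3} (h2 : v 2 = 0) (h : planeNormSq v = 0) : v = 0 := by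
  have h0 : v 0 = 0 := by unfold planeNormSq at h; nlinarith [sq_nonneg (v 0), sq_nonneg (v 1)]
  have h1 : v 1 = 0 := by unfold planeNormSq at h; nlinarith [sq_nonneg (v 0), sq_nonneg (v 1)]
  ext i; fin_cases i <;> simp [h0, h1, h2]

lemma exists_eq_smul_add_smul_rot60 {v w : V3} (hv : v 2 = 0) (hw : w 2 = 0)
    (hw0 : planeNormSq w ≠ 0) : ∃ α β : ℝ, v = α • w + β • rot60 w := by
  have hD : √3 * planeNormSq w ≠ 0 := mul_ne_zero (by positivity) hw0
  -- Cramer's rule: the determinant of `w, rot60 w` in the plane is `√3 / 2 * planeNormSq w`.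
  refine ⟨(v 0 * (√3 * w 0 + w 1) - v 1 * (w 0 - √3 * w 1)) / (√3 * planeNormSq w),
    2 * (w 0 * v 1 - w 1 * v 0) / (√3 * planeNormSq w), ?_⟩
  ext i; fin_cases i <;> simp [hv, hw] <;> field_simp <;> unfold planeNormSq <;> ring

def latticeSpan (x y z : V3) : Set V3 := {v | ∃ m n k : ℤ, v = m • x + n • y + k • z}

lemma latticeSpan_comm (x y z : V3) : latticeSpan x y z = latticeSpan y x z := by
  ext v; constructor <;> rintro ⟨m, n, k, rfl⟩ <;> exact ⟨n, m, k, by abel⟩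

lemma latticeSpan_neg_neg (x y z : V3) : latticeSpan (-x) (-y) z = latticeSpan x y z := by
  ext v; constructor <;> rintro ⟨m, n, k, rfl⟩ <;> exact ⟨-m, -n, k, by simp⟩

lemma image_latticeSpan {F : Type*} [FunLike F V3 V3] [AddMonoidHomClass F V3 V3] (f : F)
    (x y z : V3) :
    f '' latticeSpan x y z = latticeSpan (f x) (f y) (f z) := by
  ext v; constructor
  · rintro ⟨_, ⟨m, n, k, rfl⟩, rfl⟩; exact ⟨m, n, k, by simp only [map_add, map_zsmul]⟩
  · rintro ⟨m, n, k, rfl⟩; exact ⟨_, ⟨m, n, k, rfl⟩, by simp only [map_add, map_zsmul]⟩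

def scaleMap (a b : ℝ) : V3 →ₗ[ℝ] V3 where
  toFun x := ![a * x 0, a * x 1, b * x 2]
  map_add' v w := by ext i; fin_cases i <;> simp <;> ring
  map_smul' c v := by ext i; fin_cases i <;> simp <;> ring

lemma scaleMap_injective {a b : ℝ} (ha : a ≠ 0) (hb : b ≠ 0) :
    Function.Injective (scaleMap a b) := by
  intro v w h
  have h' := congrFun h
  ext i; fin_cases i
  · simpa [scaleMap, ha] using h' 0
  · simpa [scaleMap, ha] using h' 1
  · simpa [scaleMap, hb] using h' 2

lemma scaleMap_rot60 (a b : ℝ) (v : V3) : scaleMap a b (rot60 v) = rot60 (scaleMap a b v) := by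
  ext i; fin_cases i <;> simp [scaleMap] <;> ring

lemma scaleMap_of_horizontal (a b : ℝ) {v : V3} (hv : v 2 = 0) : scaleMap a b v = a • v := by
  ext i; fin_cases i <;> simp [scaleMap, hv]

lemma scaleMap_e₃ (a b : ℝ) : scaleMap a b e₃ = b • e₃ := by
  ext i; fin_cases i <;> simp [scaleMap, e₃]

lemma latticeSpan_smul_abs (a : ℝ) (w z : V3) :
    latticeSpan (|a| • w) (rot60 (|a| • w)) z = latticeSpan (a • w) (rot60 (a • w)) z := by
  rcases abs_choice a with h | h
  · rw [h]
  · rw [h, neg_smul, map_neg, latticeSpan_neg_neg]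

lemma preimage_scaleMap_latticeSpan {a b : ℝ} (ha : a ≠ 0) (hb : b ≠ 0) {x : V3} (hx : x 2 = 0) :
    scaleMap |a| b ⁻¹' latticeSpan (a • x) (rot60 (a • x)) (b • e₃) =
      latticeSpan x (rot60 x) e₃ := by
  rw [← latticeSpan_smul_abs, ← scaleMap_of_horizontal |a| b hx, ← scaleMap_rot60,
    ← scaleMap_e₃ |a|, ← image_latticeSpan]
  exact Set.preimage_image_eq _ (scaleMap_injective (abs_ne_zero.2 ha) hb)

namespace IsFullLattice

variable {L : AddSubgroup V3}

lemma coe_eq_span {b : Module.Basis (Fin 3) ℝ V3}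
    (hb : ∀ x, x ∈ L ↔ ∃ c : Fin 3 → ℤ, x = ∑ i, (c i : ℝ) • b i) :
    (L : Set V3) = Submodule.span ℤ (Set.range b) := by
  ext x
  simp only [SetLike.mem_coe, hb, Submodule.mem_span_range_iff_exists_fun, Int.cast_smul_eq_zsmul,
    eq_comm]

lemma finite_inter (hL : IsFullLattice L) {S : Set V3} (hS : Bornology.IsBounded S) :
    (S ∩ L).Finite := by
  obtain ⟨b, hb⟩ := hL
  rw [coe_eq_span hb]
  exact ZSpan.setFinite_inter b hS

lemma exists_isMinOn (hL : IsFullLattice L) {S : Set V3} {f : V3 → ℝ}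
    (hf : ∀ R, Bornology.IsBounded {v ∈ S | f v ≤ R}) (hS : (S ∩ L).Nonempty) :
    ∃ w ∈ S ∩ L, IsMinOn f (S ∩ L) w := by
  obtain ⟨v₀, hv₀⟩ := hS
  obtain ⟨w, ⟨hwS, hwL⟩, hw⟩ := Set.exists_min_image ({v ∈ S | f v ≤ f v₀} ∩ L) f
    (finite_inter hL (hf _)) ⟨v₀, ⟨hv₀.1, le_rfl⟩, hv₀.2⟩
  refine ⟨w, ⟨hwS.1, hwL⟩, fun v hv => ?_⟩
  rcases le_total (f v) (f v₀) with h | h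
  · exact hw v ⟨⟨hv.1, h⟩, hv.2⟩
  · exact (hw v₀ ⟨⟨hv₀.1, le_rfl⟩, hv₀.2⟩).trans h

lemma exists_mem_apply_ne_zero (hL : IsFullLattice L) (j : Fin 3) : ∃ v ∈ L, v j ≠ 0 := by
  obtain ⟨b, hb⟩ := hL
  by_contra! h
  have hproj : LinearMap.proj j = (0 : V3 →ₗ[ℝ] ℝ) := by
    refine b.ext fun i => h _ ((hb _).2 ⟨Pi.single i 1, ?_⟩)
    simp [Pi.single_apply]
  simpa using LinearMap.congr_fun hproj (Pi.single j 1)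

end IsFullLattice

structure IsShortestHorizontal (L : AddSubgroup V3) (w : V3) : Prop where
  mem : w ∈ L
  horizontal : w 2 = 0
  planeNormSq_ne_zero : planeNormSq w ≠ 0
  planeNormSq_le : ∀ v ∈ L, v 2 = 0 → planeNormSq v ≠ 0 → planeNormSq w ≤ planeNormSq v

lemma sq_add_mul_add_sq_lt_one {r s : ℝ} (hr : |r| ≤ 1 / 2) (hs : |s| ≤ 1 / 2) :
    r ^ 2 + r * s + s ^ 2 < 1 := by
  obtain ⟨hr₁, hr₂⟩ := abs_le.1 hr
  obtain ⟨hs₁, hs₂⟩ := abs_le.1 hs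
  nlinarith [mul_nonneg (sub_nonneg.2 hr₂) (sub_nonneg.2 hs₂),
    mul_nonneg (neg_le_iff_add_nonneg.1 hr₁) (neg_le_iff_add_nonneg.1 hs₁)]

section

variable {L : AddSubgroup V3}

lemma IsFullLattice.exists_isShortestHorizontal (hL : IsFullLattice L)
    (hρ : ∀ v ∈ L, rot60 v ∈ L) : ∃ w, IsShortestHorizontal L w := by
  set S : Set V3 := {v | v 2 = 0 ∧ planeNormSq v ≠ 0}
  have hbdd : ∀ R, Bornology.IsBounded {v ∈ S | planeNormSq v ≤ R} := by
    refine fun R => isBounded_iff_forall_norm_le.2 ⟨√R, fun v ⟨⟨h2, _⟩, hR⟩ => ?_⟩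
    unfold planeNormSq at hR
    refine (pi_norm_le_iff_of_nonneg (Real.sqrt_nonneg R)).2 fun i => ?_
    rw [Real.norm_eq_abs]
    refine Real.abs_le_sqrt ?_
    fin_cases i <;> simp [h2] <;> nlinarith [sq_nonneg (v 0), sq_nonneg (v 1)]
  obtain ⟨y, hy, hy0⟩ := hL.exists_mem_apply_ne_zero 0
  have hnonempty : (S ∩ L).Nonempty := by
    refine ⟨y - rot60 y, ⟨by simp, ?_⟩, L.sub_mem hy (hρ y hy)⟩
    have h := planeNormSq_smul_add_smul_rot60 1 (-1) y
    rw [one_smul, neg_one_smul, ← sub_eq_add_neg] at h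
    rw [h, planeNormSq]
    norm_num
    positivity
  obtain ⟨w, ⟨⟨hw2, hw0⟩, hwL⟩, hmin⟩ := hL.exists_isMinOn hbdd hnonempty
  exact ⟨w, hwL, hw2, hw0, fun v hv hv2 hv0 => hmin ⟨⟨hv2, hv0⟩, hv⟩⟩

namespace IsShortestHorizontal

variable {w : V3}

lemma of_planeNormSq_eq (hw : IsShortestHorizontal L w) {v : V3} (hv : v ∈ L) (hv2 : v 2 = 0)
    (h : planeNormSq v = planeNormSq w) : IsShortestHorizontal L v :=
  ⟨hv, hv2, h ▸ hw.planeNormSq_ne_zero, h ▸ hw.planeNormSq_le⟩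

/-- Rounding the coordinates in the basis `w, rot60 w` leaves a remainder shorter than `w`. -/
lemma exists_eq_zsmul_add_zsmul (hw : IsShortestHorizontal L w) (hρ : ∀ v ∈ L, rot60 v ∈ L)
    {v : V3} (hv : v ∈ L) (hv2 : v 2 = 0) : ∃ m n : ℤ, v = m • w + n • rot60 w := by
  obtain ⟨α, β, rfl⟩ := exists_eq_smul_add_smul_rot60 hv2 hw.horizontal hw.planeNormSq_ne_zero
  refine ⟨round α, round β, ?_⟩
  set r := α - round α
  set s := β - round β
  have hrem : r • w + s • rot60 w = α • w + β • rot60 w - (round α • w + round β • rot60 w) := by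
    simp only [r, s, ← Int.cast_smul_eq_zsmul ℝ]
    module
  have hremL : r • w + s • rot60 w ∈ L := hrem ▸
    L.sub_mem hv (L.add_mem (L.zsmul_mem hw.mem _) (L.zsmul_mem (hρ w hw.mem) _))
  have hrem0 : planeNormSq (r • w + s • rot60 w) = 0 := by
    by_contra hne
    have hle := hw.planeNormSq_le _ hremL (by simp [hw.horizontal]) hne
    rw [planeNormSq_smul_add_smul_rot60] at hle
    have hpos : 0 < planeNormSq w := lt_of_le_of_ne (by unfold planeNormSq; positivity)
      hw.planeNormSq_ne_zero.symm
    nlinarith [sq_add_mul_add_sq_lt_one (abs_sub_round α) (abs_sub_round β)]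
  have := eq_zero_of_planeNormSq_eq_zero (by simp [hw.horizontal]) hrem0
  rwa [hrem, sub_eq_zero] at this

lemma exists_eq_add_vertical (hw : IsShortestHorizontal L w) (hρ : ∀ v ∈ L, rot60 v ∈ L)
    {y : V3} (hy : y ∈ L) : ∃ m n : ℤ, y = m • w + n • rot60 w + y 2 • e₃ := by
  obtain ⟨m, n, hmn⟩ :=
    hw.exists_eq_zsmul_add_zsmul hρ (L.sub_mem hy (hρ y hy)) (by simp)
  refine ⟨-n, m + n, ?_⟩
  calc y = rot60 (y - rot60 y) + y 2 • e₃ := by rw [map_sub, rot60_rot60]; abel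
    _ = m • rot60 w + n • (rot60 w - w) + y 2 • e₃ := by
      rw [hmn, map_add, map_zsmul, map_zsmul, rot60_rot60_of_horizontal hw.horizontal]
    _ = (-n) • w + (m + n) • rot60 w + y 2 • e₃ := by
      simp only [smul_sub, neg_smul, add_smul]; abel

lemma smul_e₃_mem (hw : IsShortestHorizontal L w) (hρ : ∀ v ∈ L, rot60 v ∈ L) {y : V3}
    (hy : y ∈ L) : y 2 • e₃ ∈ L := by
  obtain ⟨m, n, hy'⟩ := hw.exists_eq_add_vertical hρ hy
  have h := L.sub_mem hy (L.add_mem (L.zsmul_mem hw.mem m) (L.zsmul_mem (hρ w hw.mem) n))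
  rwa [hy', add_sub_cancel_left] at h

lemma coe_eq_latticeSpan (hw : IsShortestHorizontal L w) (hρ : ∀ v ∈ L, rot60 v ∈ L) {c : ℝ}
    (hc : c • e₃ ∈ L) (hc_dvd : ∀ t : ℝ, t • e₃ ∈ L → ∃ k : ℤ, t = k * c) :
    (L : Set V3) = latticeSpan w (rot60 w) (c • e₃) := by
  ext y
  constructor
  · intro hy
    obtain ⟨m, n, hy'⟩ := hw.exists_eq_add_vertical hρ hy
    obtain ⟨k, hk⟩ := hc_dvd _ (hw.smul_e₃_mem hρ hy)
    exact ⟨m, n, k, by rw [hy', hk, mul_smul, Int.cast_smul_eq_zsmul]⟩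
  · rintro ⟨m, n, k, rfl⟩
    exact L.add_mem (L.add_mem (L.zsmul_mem hw.mem m) (L.zsmul_mem (hρ w hw.mem) n))
      (L.zsmul_mem hc k)

end IsShortestHorizontal

lemma IsFullLattice.exists_vertical_generator (hL : IsFullLattice L) (hρ : ∀ v ∈ L, rot60 v ∈ L)
    {w : V3} (hw : IsShortestHorizontal L w) :
    ∃ c : ℝ, 0 < c ∧ c • e₃ ∈ L ∧ ∀ t : ℝ, t • e₃ ∈ L → ∃ k : ℤ, t = k * c := by
  set S : Set V3 := (· • e₃) '' Set.Ioi (0 : ℝ)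
  have hbdd : ∀ R, Bornology.IsBounded {v ∈ S | v 2 ≤ R} := by
    refine fun R => ((isCompact_Icc (a := 0) (b := R)).image
      (by fun_prop : Continuous (· • e₃ : ℝ → V3))).isBounded.subset ?_
    rintro _ ⟨⟨t, ht, rfl⟩, htR⟩
    exact ⟨t, ⟨le_of_lt ht, by simpa [e₃] using htR⟩, rfl⟩
  obtain ⟨y, hy, hy2⟩ := hL.exists_mem_apply_ne_zero 2
  have hnonempty : (S ∩ L).Nonempty := by
    refine ⟨|y 2| • e₃, ⟨_, abs_pos.2 hy2, rfl⟩, ?_⟩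
    rcases abs_choice (y 2) with h | h <;> rw [h]
    · exact hw.smul_e₃_mem hρ hy
    · rw [neg_smul]; exact L.neg_mem (hw.smul_e₃_mem hρ hy)
  obtain ⟨_, ⟨⟨c, hc, rfl⟩, hcL⟩, hmin⟩ := hL.exists_isMinOn hbdd hnonempty
  set Z : AddSubgroup ℝ := L.comap (LinearMap.toSpanSingleton ℝ V3 e₃).toAddMonoidHom
  have hZ : Z = AddSubgroup.closure {c} := by
    refine AddSubgroup.cyclic_of_min ⟨⟨hcL, hc⟩, fun t ⟨ht, htpos⟩ => ?_⟩
    simpa [e₃] using hmin ⟨⟨t, htpos, rfl⟩, ht⟩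
  refine ⟨c, hc, hcL, fun t ht => ?_⟩
  obtain ⟨k, hk⟩ := AddSubgroup.mem_closure_singleton.1 (hZ ▸ ht : t ∈ AddSubgroup.closure {c})
  exact ⟨k, by rw [← hk, zsmul_eq_mul]⟩

lemma Int.eq_of_sq_add_mul_add_sq_eq_one {m n : ℤ} (h : m ^ 2 + m * n + n ^ 2 = 1) :
    m = 1 ∧ n = 0 ∨ m = -1 ∧ n = 0 ∨ m = 0 ∧ n = 1 ∨ m = 0 ∧ n = -1 ∨
      m = -1 ∧ n = 1 ∨ m = 1 ∧ n = -1 := by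
  have hm : m ^ 2 ≤ 1 := by nlinarith [sq_nonneg (m + 2 * n)]
  have hn : n ^ 2 ≤ 1 := by nlinarith [sq_nonneg (2 * m + n)]
  have hm₁ : -1 ≤ m := by nlinarith
  have hm₂ : m ≤ 1 := by nlinarith
  have hn₁ : -1 ≤ n := by nlinarith
  have hn₂ : n ≤ 1 := by nlinarith
  interval_cases m <;> interval_cases n <;> simp_all

/-- The mirror image of `w` is `m • w + n • rot60 w` with `m ^ 2 + m * n + n ^ 2 = 1`; in each of
the six cases one of `w`, `rot60 w`, `w - rot60 w` lies on the `x`-axis or on the line of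
`2 u₁ - u₂`. -/
lemma IsShortestHorizontal.exists_on_axis_or_diagonal {w : V3} (hw : IsShortestHorizontal L w)
    (hσ : ∀ v ∈ L, reflPlaneU₁ v ∈ L) (hρ : ∀ v ∈ L, rot60 v ∈ L) :
    ∃ w', IsShortestHorizontal L w' ∧ (w' 1 = 0 ∨ w' 0 = -(√3 * w' 1)) := by
  obtain ⟨m, n, hmn⟩ := hw.exists_eq_zsmul_add_zsmul hρ (hσ w hw.mem)
    (by simp [reflPlaneU₁, hw.horizontal])
  have hunit : m ^ 2 + m * n + n ^ 2 = 1 := by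
    have h := planeNormSq_smul_add_smul_rot60 m n w
    rw [Int.cast_smul_eq_zsmul, Int.cast_smul_eq_zsmul, ← hmn, planeNormSq_reflPlaneU₁] at h
    have h' : ((m ^ 2 + m * n + n ^ 2 : ℤ) : ℝ) = 1 := by
      push_cast
      exact (mul_eq_right₀ hw.planeNormSq_ne_zero).1 h.symm
    exact_mod_cast h'
  have h0 : w 0 = m * w 0 + n * (w 0 / 2 - √3 / 2 * w 1) := by
    simpa [reflPlaneU₁] using congrFun hmn 0
  have h1 : -w 1 = m * w 1 + n * (√3 / 2 * w 0 + w 1 / 2) := by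
    simpa [reflPlaneU₁] using congrFun hmn 1
  have hrot : IsShortestHorizontal L (rot60 w) :=
    hw.of_planeNormSq_eq (hρ w hw.mem) (by simp [hw.horizontal])
      (by simpa using planeNormSq_smul_add_smul_rot60 0 1 w)
  have hsub : IsShortestHorizontal L (w - rot60 w) :=
    hw.of_planeNormSq_eq (L.sub_mem hw.mem (hρ w hw.mem)) (by simp [hw.horizontal])
      (by simpa [← sub_eq_add_neg] using planeNormSq_smul_add_smul_rot60 1 (-1) w)
  have hs := sqrt_three_mul_self
  rcases Int.eq_of_sq_add_mul_add_sq_eq_one hunit with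
    ⟨rfl, rfl⟩ | ⟨rfl, rfl⟩ | ⟨rfl, rfl⟩ | ⟨rfl, rfl⟩ | ⟨rfl, rfl⟩ | ⟨rfl, rfl⟩ <;>
    push_cast at h0 h1
  · exact ⟨w, hw, Or.inl (by linear_combination (-1 / 2) * h1)⟩
  · refine ⟨rot60 w, hrot, Or.inr ?_⟩
    simp only [rot60_apply_zero, rot60_apply_one]
    linear_combination h0 + (w 0 / 2) * hs
  · exact ⟨w, hw, Or.inr (by linear_combination 2 * h0)⟩
  · refine ⟨w - rot60 w, hsub, Or.inl ?_⟩
    simp only [Pi.sub_apply, rot60_apply_one]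
    linear_combination (-√3 / 3) * h0 - (w 1 / 6) * hs
  · refine ⟨rot60 w, hrot, Or.inl ?_⟩
    simp only [rot60_apply_one]
    linear_combination (√3 / 3) * h0 - (w 1 / 6) * hs
  · refine ⟨w - rot60 w, hsub, Or.inr ?_⟩
    simp only [Pi.sub_apply, rot60_apply_zero, rot60_apply_one]
    linear_combination (-2) * h0 - (w 0 / 2) * hs

lemma exists_eq_smul_u₁_or_smul_two_u₁_sub_u₂ {w : V3} (h2 : w 2 = 0) (hw : planeNormSq w ≠ 0)
    (h : w 1 = 0 ∨ w 0 = -(√3 * w 1)) :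
    ∃ a : ℝ, a ≠ 0 ∧ (w = a • u₁ ∨ w = a • ((2 : ℤ) • u₁ - u₂)) := by
  rcases h with h1 | h0
  · refine ⟨w 0, fun h => hw (by simp [planeNormSq, h, h1]), Or.inl ?_⟩
    ext i; fin_cases i <;> simp [u₁, h1, h2]
  · have h1 : w 1 ≠ 0 := fun h => hw (by simp [planeNormSq, h0, h])
    refine ⟨-2 * w 1 / √3, by positivity, Or.inr ?_⟩
    ext i; fin_cases i <;> simp [u₁, u₂, h0, h2] <;> field_simp
    norm_num

end

/-- A full-rank lattice in `ℝ³` preserved by the group `D̃₆` generated by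
the reflections in the planes spanned by `u₁, e₃` and by `v = (√3/2, 1/2, 0), e₃` (mirrors
meeting at angle `π/6`) is the image under a diagonal map `D = diag(a, a, b)` (with
`a, b > 0`) of either `L₍₃,₆₎ + ℤe₃` or `L₍₃,₆₎ᶜ + ℤe₃`. -/
theorem statement15 (L : AddSubgroup V3) (hL : IsFullLattice L)
    (h₁ : reflPlaneU₁ '' (L : Set V3) = (L : Set V3))
    (h₂ : reflPlaneV '' (L : Set V3) = (L : Set V3)) :
    ∃ a b : ℝ, 0 < a ∧ 0 < b ∧
      (((fun x : V3 => ![a * x 0, a * x 1, b * x 2]) ⁻¹' (L : Set V3)) = triLat ∨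
       ((fun x : V3 => ![a * x 0, a * x 1, b * x 2]) ⁻¹' (L : Set V3)) = triCentredLat) := by
  have hσ : ∀ v ∈ L, reflPlaneU₁ v ∈ L := fun v hv => h₁.subset ⟨v, hv, rfl⟩
  have hρ : ∀ v ∈ L, rot60 v ∈ L := fun v hv =>
    reflPlaneV_reflPlaneU₁ v ▸ h₂.subset ⟨_, hσ v hv, rfl⟩
  obtain ⟨w₀, hw₀⟩ := hL.exists_isShortestHorizontal hρ
  obtain ⟨c, hc, hcL, hc_dvd⟩ := hL.exists_vertical_generator hρ hw₀
  obtain ⟨w, hw, hdir⟩ := hw₀.exists_on_axis_or_diagonal hσ hρ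
  obtain ⟨a, ha, hwa⟩ :=
    exists_eq_smul_u₁_or_smul_two_u₁_sub_u₂ hw.horizontal hw.planeNormSq_ne_zero hdir
  refine ⟨|a|, c, abs_pos.2 ha, hc, ?_⟩
  change scaleMap |a| c ⁻¹' L = _ ∨ scaleMap |a| c ⁻¹' L = _
  rw [hw.coe_eq_latticeSpan hρ hcL hc_dvd]
  rcases hwa with rfl | rfl
  · left
    rw [preimage_scaleMap_latticeSpan ha hc.ne' (by simp [u₁]), rot60_u₁]
    rfl
  · right
    rw [preimage_scaleMap_latticeSpan ha hc.ne' (by simp [u₁, u₂]), rot60_two_u₁_sub_u₂,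
      latticeSpan_comm]
    rfl

end
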